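/- Suppose f : ℝ^d → ℝ is L-smooth, bounded below by its finite minimum f_*, and satisfies the PL inequality with constant l > 0. Consider the AdaGrad iteration with ε ∈ (0,1) and y_0 = 0, and suppose y_{k+1,i} ≤ (1-ε)² for all i and all k ≥ 0. If 0 < h < min{2ε²/L, 1/(2l)}, then f(x_{k+1}) - f_* ≤ (1 - c₂)(f(x_k) - f_*) for all k ≥ 0, where c₂ = 2lh(1 - Lh/(2ε²)) ∈ (0,1). -/

import Mathlib

open InnerProductSpace Real Set Finset

local notation "⟪" a ", " b "⟫" => @inner ℝ _ _ a b

lemma grad_inner {E : Type*} [NormedAddCommGroup E] [InnerProductSpace ℝ E] [CompleteSpace E]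
    (f : E → ℝ) (a v : E) : ⟪gradient f a, v⟫ = fderiv ℝ f a v := by
  simpa [gradient] using InnerProductSpace.toDual_symm_apply (𝕜 := ℝ) (E := E)

lemma descent {E : Type*} [NormedAddCommGroup E] [InnerProductSpace ℝ E] [CompleteSpace E]
    (f : E → ℝ) (L : ℝ) (hdiff : Differentiable ℝ f)
    (hlip : ∀ x y : E, ‖gradient f x - gradient f y‖ ≤ L * ‖x - y‖)
    (a b : E) :
    f b ≤ f a + ⟪gradient f a, b - a⟫ + L / 2 * ‖b - a‖ ^ 2 := by
  set v := b - a with hv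
  set ψ : ℝ → ℝ := fun t => f (a + t • v) - t * ⟪gradient f a, v⟫ - L / 2 * ‖v‖ ^ 2 * t ^ 2
    with hψ
  have hγ : ∀ t : ℝ, HasDerivAt (fun t : ℝ => a + t • v) v t := by
    intro t
    simpa using (HasDerivAt.const_add a ((hasDerivAt_id t).smul_const v))
  have hderiv : ∀ t : ℝ, HasDerivAt ψ
      (⟪gradient f (a + t • v), v⟫ - ⟪gradient f a, v⟫ - L / 2 * ‖v‖ ^ 2 * (2 * t)) t := by
    intro t
    have h1 : HasDerivAt (fun t : ℝ => f (a + t • v)) (fderiv ℝ f (a + t • v) v) t :=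
      (hdiff (a + t • v)).hasFDerivAt.comp_hasDerivAt t (hγ t)
    rw [← grad_inner] at h1
    have h2 : HasDerivAt (fun t : ℝ => t * ⟪gradient f a, v⟫) ⟪gradient f a, v⟫ t := by
      simpa using (hasDerivAt_id t).mul_const (⟪gradient f a, v⟫)
    have h3 : HasDerivAt (fun t : ℝ => L / 2 * ‖v‖ ^ 2 * t ^ 2)
        (L / 2 * ‖v‖ ^ 2 * (2 * t)) t := by
      simpa using (hasDerivAt_pow 2 t).const_mul (L / 2 * ‖v‖ ^ 2)
    exact (h1.sub h2).sub h3
  have hmono : AntitoneOn ψ (Icc (0 : ℝ) 1) := by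
    apply antitoneOn_of_deriv_nonpos (convex_Icc 0 1)
    · exact Continuous.continuousOn (continuous_iff_continuousAt.2 fun t => (hderiv t).continuousAt)
    · intro t _
      exact ((hderiv t).differentiableAt).differentiableWithinAt
    · intro t ht
      rw [interior_Icc] at ht
      rw [(hderiv t).deriv]
      have hb : ⟪gradient f (a + t • v) - gradient f a, v⟫ ≤ L * t * ‖v‖ ^ 2 := by
        calc ⟪gradient f (a + t • v) - gradient f a, v⟫
            ≤ ‖gradient f (a + t • v) - gradient f a‖ * ‖v‖ := real_inner_le_norm _ _
          _ ≤ (L * ‖a + t • v - a‖) * ‖v‖ := by gcongr; exact hlip _ _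
          _ = L * t * ‖v‖ ^ 2 := by
              rw [add_sub_cancel_left, norm_smul]
              simp [abs_of_pos ht.1]
              ring
      have := inner_sub_left (𝕜 := ℝ) (gradient f (a + t • v)) (gradient f a) v
      nlinarith [this]
  have := hmono (Set.left_mem_Icc.2 zero_le_one) (Set.right_mem_Icc.2 zero_le_one) zero_le_one
  simp only [hψ] at this
  simp only [zero_smul, add_zero, one_smul, zero_mul, sub_zero, zero_pow, one_pow, mul_one,
    add_sub_cancel] at this
  have hab : a + v = b := by rw [hv]; abel
  rw [hab] at this
  nlinarith [this]

theorem stmt_7 (d : ℕ) (f : EuclideanSpace ℝ (Fin d) → ℝ) (L l fstar h ε : ℝ)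
    (hL : 0 < L) (hl : 0 < l) (hε0 : 0 < ε) (hε1 : ε < 1)
    (hdiff : Differentiable ℝ f)
    (hlip : ∀ x y : EuclideanSpace ℝ (Fin d),
      ‖gradient f x - gradient f y‖ ≤ L * ‖x - y‖)
    (hmin : ∀ x, fstar ≤ f x) (hattain : ∃ x, f x = fstar)
    (hPL : ∀ x : EuclideanSpace ℝ (Fin d),
      l * (f x - fstar) ≤ (1 / 2) * ‖gradient f x‖ ^ 2)
    (x : ℕ → EuclideanSpace ℝ (Fin d)) (y : ℕ → Fin d → ℝ)
    (hy0 : ∀ i, y 0 i = 0)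
    (hy : ∀ k i, y (k + 1) i = y k i + (gradient f (x k) i) ^ 2)
    (hx : ∀ k i, x (k + 1) i =
      x k i - h * gradient f (x k) i / (Real.sqrt (y (k + 1) i) + ε))
    (hsmall : ∀ k i, y (k + 1) i ≤ (1 - ε) ^ 2)
    (hh0 : 0 < h) (hh1 : h < min (2 * ε ^ 2 / L) (1 / (2 * l))) :
    (0 < 2 * l * h * (1 - L * h / (2 * ε ^ 2))
      ∧ 2 * l * h * (1 - L * h / (2 * ε ^ 2)) < 1)
    ∧ ∀ k, f (x (k + 1)) - fstar ≤
        (1 - 2 * l * h * (1 - L * h / (2 * ε ^ 2))) * (f (x k) - fstar) := by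
  have hε2 : (0:ℝ) < 2 * ε ^ 2 := by positivity
  have h1a : h < 2 * ε ^ 2 / L := (lt_min_iff.mp hh1).1
  have h1b : h < 1 / (2 * l) := (lt_min_iff.mp hh1).2
  have ht1 : L * h / (2 * ε ^ 2) < 1 := by
    rw [div_lt_one hε2]
    calc L * h < L * (2 * ε ^ 2 / L) := by gcongr
      _ = 2 * ε ^ 2 := by field_simp
  have ht0 : 0 < L * h / (2 * ε ^ 2) := by positivity
  have h2lh : 2 * l * h < 1 := by
    rw [lt_div_iff₀ (by positivity)] at h1b; linarith
  have hc2pos : 0 < 2 * l * h * (1 - L * h / (2 * ε ^ 2)) := by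
    apply mul_pos (by positivity); linarith
  have hc2lt : 2 * l * h * (1 - L * h / (2 * ε ^ 2)) < 1 := by
    nlinarith [mul_pos (mul_pos (mul_pos two_pos hl) hh0) ht0]
  refine ⟨⟨hc2pos, hc2lt⟩, fun k => ?_⟩
  set g : EuclideanSpace ℝ (Fin d) := gradient f (x k) with hg
  set D : Fin d → ℝ := fun i => Real.sqrt (y (k+1) i) + ε with hD
  have hDpos : ∀ i, 0 < D i := fun i => add_pos_of_nonneg_of_pos (Real.sqrt_nonneg _) hε0
  have hDε : ∀ i, ε ≤ D i := fun i => le_add_of_nonneg_left (Real.sqrt_nonneg _)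
  have hD1 : ∀ i, D i ≤ 1 := by
    intro i
    have h1 : Real.sqrt (y (k+1) i) ≤ 1 - ε := by
      calc Real.sqrt (y (k+1) i) ≤ Real.sqrt ((1-ε)^2) := Real.sqrt_le_sqrt (hsmall k i)
        _ = 1 - ε := Real.sqrt_sq (by linarith)
    simp only [hD]; linarith
  have hvi : ∀ i, (x (k+1) - x k) i = -(h * g i / D i) := by
    intro i
    have : (x (k+1) - x k) i = x (k+1) i - x k i := rfl
    rw [this, hx k i, hD]
    ring
  have hnorm : ∀ w : EuclideanSpace ℝ (Fin d), ‖w‖^2 = ∑ i, w i ^ 2 := by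
    intro w
    rw [EuclideanSpace.norm_eq, Real.sq_sqrt (by positivity)]
    simp [sq_abs]
  have hinner : ⟪g, x (k+1) - x k⟫ = ∑ i, g i * (x (k+1) - x k) i := by
    simp [PiLp.inner_apply, RCLike.inner_apply]
    exact Finset.sum_congr rfl fun i _ => mul_comm _ _
  have hA : ⟪g, x (k+1) - x k⟫ ≤ -h * ‖g‖^2 := by
    rw [hinner, hnorm]
    calc ∑ i, g i * (x (k+1) - x k) i
        = ∑ i, -(h * (g i ^ 2 / D i)) := by
          refine Finset.sum_congr rfl fun i _ => ?_
          rw [hvi i]; ring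
      _ ≤ ∑ i, -(h * g i ^ 2) := by
          refine Finset.sum_le_sum fun i _ => ?_
          have : g i ^ 2 ≤ g i ^ 2 / D i := by
            rw [le_div_iff₀ (hDpos i)]
            exact mul_le_of_le_one_right (sq_nonneg _) (hD1 i)
          nlinarith [hh0]
      _ = -h * ∑ i, g i ^ 2 := by
          rw [Finset.mul_sum]
          exact Finset.sum_congr rfl fun i _ => by ring
  have hB : ‖x (k+1) - x k‖^2 ≤ h^2 / ε^2 * ‖g‖^2 := by
    rw [hnorm, hnorm, Finset.mul_sum]
    refine Finset.sum_le_sum fun i _ => ?_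
    rw [hvi i]
    have h1 : ε ^ 2 ≤ D i ^ 2 := by nlinarith [hDε i, hε0]
    calc (-(h * g i / D i)) ^ 2 = h ^ 2 * g i ^ 2 / D i ^ 2 := by
          rw [neg_pow, div_pow, mul_pow]; ring
      _ ≤ h ^ 2 * g i ^ 2 / ε ^ 2 := by gcongr <;> positivity
      _ = h ^ 2 / ε ^ 2 * g i ^ 2 := by ring
  have hdes := descent f L hdiff hlip (x k) (x (k+1))
  have h5 : L / 2 * ‖x (k+1) - x k‖^2 ≤ L / 2 * (h^2 / ε^2 * ‖g‖^2) :=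
    mul_le_mul_of_nonneg_left hB (by positivity)
  have h6 : L / 2 * (h^2 / ε^2 * ‖g‖^2) = h * (L * h / (2 * ε^2)) * ‖g‖^2 := by
    field_simp
  have key : f (x (k+1)) ≤ f (x k) - h * (1 - L * h / (2 * ε^2)) * ‖g‖^2 := by
    rw [h6] at h5
    linarith [hdes, hA, h5]
  have hc : 0 ≤ h * (1 - L * h / (2 * ε^2)) := mul_nonneg hh0.le (by linarith)
  have PL2 : 2 * l * (f (x k) - fstar) ≤ ‖g‖^2 := by linarith [hPL (x k)]
  have hmul := mul_le_mul_of_nonneg_left PL2 hc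
  linarith [key, hmul]
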